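/- arXiv:1309.4347 — 9 statements merged into one kernel-verified Lean document; each statement's English description precedes it below -/
import Mathlib

section
/- Let k = f·f′ be an odd positive integer with 1 < f < k, and suppose there exist coprime integers x, y with x² − (k²+1)y² = f′². Then f′ is not a prime power, i.e., f′ is not of the form pᵐ for a prime p and positive integer m. -/
/-!
Descent: a primitive representation `x² - (k²+1)y² = c` with `|c| ≤ k` and `y ≠ 0` satisfies
`k|y| ≤ |x| < (k+1)|y|`, and multiplying by the unit `k - √(k²+1)` of norm `-1` gives a primitive
representation of `-c` with smaller `|y|`; hence only `c = ±1` is primitively represented.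
If `f' ≤ f` this excludes `c = f'²` directly. If `f < f'` and `f' = pᵐ` with `p` odd, then
`f'² ∣ x ∓ y`, and `x ∓ y = f'² t` turns the equation into a primitive representation of `-f²`,
again excluded.
-/

lemma sub_mul_nonneg_and_lt_of_sq_sub_mul_sq_eq {k a b c : ℤ} (hk : 0 < k) (ha : 0 ≤ a)
    (hb : 0 < b) (hc : |c| ≤ k) (h : a ^ 2 - (k ^ 2 + 1) * b ^ 2 = c) :
    0 ≤ a - k * b ∧ a - k * b < b := by
  obtain ⟨hc₁, hc₂⟩ := abs_le.mp hc
  have hkb : k ≤ k * b := le_mul_of_one_le_right hk.le hb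
  constructor
  · by_contra! hlt
    have : a ^ 2 ≤ (k * b - 1) ^ 2 := pow_le_pow_left₀ ha (by linarith) 2
    nlinarith
  · by_contra! hle
    have : b * (2 * k * b + b) ≤ (a - k * b) * (a + k * b) :=
      mul_le_mul hle (by linarith) (by positivity) (by linarith)
    nlinarith

theorem eq_one_or_eq_neg_one_of_sq_sub_mul_sq_eq {k c x y : ℤ} (hk : 0 < k) (hc : |c| ≤ k)
    (hxy : IsCoprime x y) (h : x ^ 2 - (k ^ 2 + 1) * y ^ 2 = c) : c = 1 ∨ c = -1 := by
  induction hn : y.natAbs using Nat.strong_induction_on generalizing c x y with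
  | _ n ih =>
  obtain rfl | hy := eq_or_ne y 0
  · rcases Int.isUnit_iff.mp (isCoprime_zero_right.mp hxy) with rfl | rfl <;> simp [← h]
  obtain ⟨u, v, huv⟩ := hxy.abs_left.abs_right
  have habs : |x| ^ 2 - (k ^ 2 + 1) * |y| ^ 2 = c := by rwa [sq_abs, sq_abs]
  obtain ⟨hy₀, hy₁⟩ :=
    sub_mul_nonneg_and_lt_of_sq_sub_mul_sq_eq hk (abs_nonneg x) (abs_pos.mpr hy) hc habs
  have hcop : IsCoprime (k * |x| - (k ^ 2 + 1) * |y|) (|x| - k * |y|) :=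
    ⟨-(u * k) - v, u * (k ^ 2 + 1) + v * k, by linear_combination huv⟩
  have hlt : (|x| - k * |y|).natAbs < n := by
    rw [← hn, ← Int.ofNat_lt, ← Int.abs_eq_natAbs, ← Int.abs_eq_natAbs, abs_of_nonneg hy₀]
    exact hy₁
  have := ih _ hlt (by rwa [abs_neg]) hcop (by linear_combination -habs) rfl
  omega

lemma pow_dvd_sub_or_pow_dvd_add_of_pow_dvd_sq_sub_sq {p x y : ℤ} (hp : Prime p) (hp2 : ¬p ∣ 2)
    (hxy : IsCoprime x y) {n : ℕ} (h : p ^ n ∣ x ^ 2 - y ^ 2) : p ^ n ∣ x - y ∨ p ^ n ∣ x + y := by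
  have hboth : ¬(p ∣ x - y ∧ p ∣ x + y) := by
    rintro ⟨h₁, h₂⟩
    have hx : p ∣ 2 * x := (show x - y + (x + y) = 2 * x by ring) ▸ dvd_add h₁ h₂
    have hy : p ∣ 2 * y := (show x + y - (x - y) = 2 * y by ring) ▸ dvd_sub h₂ h₁
    exact hp.not_isUnit <|
      hxy.isUnit_of_dvd' ((hp.dvd_mul.mp hx).resolve_left hp2) ((hp.dvd_mul.mp hy).resolve_left hp2)
  rw [sq_sub_sq] at h
  by_cases hd : p ∣ x + y
  · have hcop : IsCoprime (p ^ n) (x - y) :=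
      (hp.coprime_iff_not_dvd.mpr fun h' ↦ hboth ⟨h', hd⟩).pow_left
    exact .inr (hcop.dvd_of_dvd_mul_right h)
  · exact .inl ((hp.coprime_iff_not_dvd.mpr hd).pow_left.dvd_of_dvd_mul_left h)

lemma not_sq_dvd_sub_of_sq_sub_mul_sq_eq_sq {f f' x y : ℤ} (hf : 1 < f) (hff' : f ≤ f')
    (h : x ^ 2 - ((f * f') ^ 2 + 1) * y ^ 2 = f' ^ 2) : ¬f' ^ 2 ∣ x - y := by
  rintro ⟨t, ht⟩
  have ht' : t * (f' ^ 2 * t + 2 * y) = f ^ 2 * y ^ 2 + 1 := by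
    refine mul_left_cancel₀ (pow_ne_zero 2 (by omega : f' ≠ 0)) ?_
    linear_combination h - (x + y + f' ^ 2 * t) * ht
  have hcop : IsCoprime (f ^ 2 * y - t) t := ⟨-y, f' ^ 2 * t + y, by linear_combination ht'⟩
  have hle : |-f ^ 2| ≤ f * f' := by rw [abs_neg, abs_sq]; nlinarith
  rcases eq_one_or_eq_neg_one_of_sq_sub_mul_sq_eq (by nlinarith) hle hcop
    (by linear_combination (-(f ^ 2)) * ht') with h | h <;> nlinarith

theorem stmt_2_general (k f f' : ℤ) (hodd : Odd k) (hkff : k = f * f')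
    (hf1 : 1 < f) (x y : ℤ) (hxy : IsCoprime x y)
    (heq : x ^ 2 - (k ^ 2 + 1) * y ^ 2 = f' ^ 2) :
    ¬ ∃ (p : ℕ) (m : ℕ), p.Prime ∧ 0 < m ∧ f' = (p : ℤ) ^ m := by
  rintro ⟨p, m, hp, hm, rfl⟩
  subst hkff
  have hp2 : 2 ≤ (p : ℤ) := mod_cast hp.two_le
  have hf' : 2 ≤ (p : ℤ) ^ m := hp2.trans (le_self_pow₀ (by linarith) hm.ne')
  rcases le_or_gt ((p : ℤ) ^ m) f with hle | hlt
  · rcases eq_one_or_eq_neg_one_of_sq_sub_mul_sq_eq (by positivity)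
      (by rw [abs_sq]; nlinarith) hxy heq with h | h <;> nlinarith
  have hp_not_dvd_two : ¬(p : ℤ) ∣ 2 := by
    intro hdvd
    have hp_eq : (p : ℤ) = 2 := le_antisymm (Int.le_of_dvd two_pos hdvd) hp2
    have hodd' := (Int.odd_mul.mp hodd).2
    rw [hp_eq] at hodd'
    exact Int.not_even_iff_odd.mpr hodd' ((Int.even_pow' hm.ne').mpr even_two)
  rcases pow_dvd_sub_or_pow_dvd_add_of_pow_dvd_sq_sub_sq (n := m * 2)
    (Nat.prime_iff_prime_int.mp hp) hp_not_dvd_two hxy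
    ⟨f ^ 2 * y ^ 2 + 1, by linear_combination heq⟩ with hd | hd
  · exact not_sq_dvd_sub_of_sq_sub_mul_sq_eq_sq hf1 hlt.le heq (by rwa [← pow_mul])
  · exact not_sq_dvd_sub_of_sq_sub_mul_sq_eq_sq (x := x) (y := -y) hf1 hlt.le
      (by linear_combination heq) (by rwa [← pow_mul, sub_neg_eq_add])

theorem stmt_2 (k f f' : ℤ) (hk : 0 < k) (hodd : Odd k) (hkff : k = f * f')
    (hf1 : 1 < f) (hfk : f < k) (x y : ℤ) (hxy : IsCoprime x y)
    (heq : x ^ 2 - (k ^ 2 + 1) * y ^ 2 = f' ^ 2) :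
    ¬ ∃ (p : ℕ) (m : ℕ), p.Prime ∧ 0 < m ∧ f' = (p : ℤ) ^ m :=
  stmt_2_general k f f' hodd hkff hf1 x y hxy heq
end

section
/- Let k = f·f′ be an odd positive integer with 1 < f < k. If there exist coprime integers x, y with x² − (k²+1)y² = f′², then f < f′. -/
/-!
Multiplying by the norm-one unit `(2k² + 1) - 2k√(k² + 1)` of `ℤ[√(k² + 1)]` sends a coprime
solution of `x² - (k² + 1)y² = c` with `x, y ≥ 0` and `x² > (k² + 1)c` to a coprime solution with
smaller `|y|`. So a coprime solution with `1 < c ≤ k` would descend to one with `x² ≤ (k² + 1)c`,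
and such a solution is squeezed between `ky < x` and `y² < c ≤ k`, which is impossible.
If `f' ≤ f`, then `c = f'²` lies in that range, since `f'² ≤ f f' = k` and `f' > 1`.
-/

section PellDescent

variable {k c x y : ℤ}

lemma pell_descent_eq (k x y : ℤ) :
    ((2 * k ^ 2 + 1) * x - 2 * k * (k ^ 2 + 1) * y) ^ 2
      - (k ^ 2 + 1) * ((2 * k ^ 2 + 1) * y - 2 * k * x) ^ 2
      = x ^ 2 - (k ^ 2 + 1) * y ^ 2 := by
  ring

lemma IsCoprime.pell_descent (h : IsCoprime x y) :
    IsCoprime ((2 * k ^ 2 + 1) * x - 2 * k * (k ^ 2 + 1) * y) ((2 * k ^ 2 + 1) * y - 2 * k * x) := by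
  obtain ⟨u, v, huv⟩ := h
  exact ⟨u * (2 * k ^ 2 + 1) + v * (2 * k), u * (2 * k * (k ^ 2 + 1)) + v * (2 * k ^ 2 + 1),
    by linear_combination huv⟩

lemma abs_pell_descent_lt (hk : 0 < k) (hc : 0 < c) (hx : 0 ≤ x) (hy : 0 < y)
    (heq : x ^ 2 - (k ^ 2 + 1) * y ^ 2 = c) (hbig : (k ^ 2 + 1) * c < x ^ 2) :
    |(2 * k ^ 2 + 1) * y - 2 * k * x| < y := by
  have hky : k * y < x := lt_of_pow_lt_pow_left₀ 2 hx (by nlinarith)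
  have hkx : k * x < (k ^ 2 + 1) * y := lt_of_pow_lt_pow_left₀ 2 (by positivity) (by nlinarith)
  rw [abs_lt]
  constructor <;> nlinarith

lemma not_pell_eq_of_sq_le (hck : c ≤ k) (hy : 0 < y) (hx : 0 ≤ x)
    (heq : x ^ 2 - (k ^ 2 + 1) * y ^ 2 = c) (hsmall : x ^ 2 ≤ (k ^ 2 + 1) * c) : False := by
  have hyc : y ^ 2 < c := by nlinarith
  have hk : 0 < k := by nlinarith
  have hky : k * y + 1 ≤ x := by nlinarith
  nlinarith [mul_le_mul hky hky (by positivity) hx]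

theorem pell_ne_of_isCoprime (hc : 1 < c) (hck : c ≤ k) (hxy : IsCoprime x y) :
    x ^ 2 - (k ^ 2 + 1) * y ^ 2 ≠ c := by
  induction hn : y.natAbs using Nat.strong_induction_on generalizing x y with
  | _ n ih =>
  intro heq
  have hxy' := hxy.abs_abs
  have heq' : |x| ^ 2 - (k ^ 2 + 1) * |y| ^ 2 = c := by simpa only [sq_abs] using heq
  rcases (abs_nonneg y).eq_or_lt with hy | hy
  · rw [abs_eq_zero.mp hy.symm] at hxy heq
    have hx1 : x ^ 2 = 1 := Int.isUnit_sq (isCoprime_zero_right.mp hxy)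
    omega
  by_cases hsmall : |x| ^ 2 ≤ (k ^ 2 + 1) * c
  · exact not_pell_eq_of_sq_le hck hy (abs_nonneg x) heq' hsmall
  have hlt := abs_pell_descent_lt (by omega) (by omega) (abs_nonneg x) hy heq' (not_le.mp hsmall)
  exact ih _ (by rw [← hn]; zify; exact hlt) hxy'.pell_descent rfl
    ((pell_descent_eq k _ _).trans heq')

end PellDescent

theorem stmt_3_general (k f f' : ℤ) (hkff : k = f * f')
    (hf1 : 1 < f) (hfk : f < k) (x y : ℤ) (hxy : IsCoprime x y)
    (heq : x ^ 2 - (k ^ 2 + 1) * y ^ 2 = f' ^ 2) :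
    f < f' := by
  have hf' : 1 < f' := by nlinarith
  by_contra! hle
  have hck : f' ^ 2 ≤ k := by nlinarith
  exact pell_ne_of_isCoprime (by nlinarith) hck hxy heq

theorem stmt_3 (k f f' : ℤ) (hk : 0 < k) (hodd : Odd k) (hkff : k = f * f')
    (hf1 : 1 < f) (hfk : f < k) (x y : ℤ) (hxy : IsCoprime x y)
    (heq : x ^ 2 - (k ^ 2 + 1) * y ^ 2 = f' ^ 2) :
    f < f' :=
  stmt_3_general k f f' hkff hf1 hfk x y hxy heq
end

section
/- Suppose {1, b, c} is a D(−1) triple with 1 < b < c, b = 1 + r², c = 1 + s², bc = 1 + t² (r, s, t positive integers). Then gcd(t, s) = gcd(t, r) = gcd(r, s). -/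
/-! Multiplying out `(1 + r²)(1 + s²) = 1 + t²` shows that each of `t², r², s²` is an integer
combination of the other two squares. Hence any common divisor of two of `t, r, s` divides the
square, and so the value, of the third, which forces the three pairwise gcds to coincide. -/

namespace Int

theorem dvd_of_sq_eq_add_mul_sq {k x y z a b : ℤ} (hx : k ∣ x) (hy : k ∣ y)
    (h : z ^ 2 = a * x ^ 2 + b * y ^ 2) : k ∣ z := by
  rw [← Int.pow_dvd_pow_iff two_ne_zero, h]
  exact dvd_add ((pow_dvd_pow_of_dvd hx 2).mul_left a) ((pow_dvd_pow_of_dvd hy 2).mul_left b)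

theorem gcd_dvd_gcd_of_sq_eq_add_mul_sq {x y z a b : ℤ} (h : z ^ 2 = a * x ^ 2 + b * y ^ 2) :
    Int.gcd x y ∣ Int.gcd x z :=
  Int.natCast_dvd_natCast.mp <| Int.dvd_coe_gcd (Int.gcd_dvd_left x y)
    (dvd_of_sq_eq_add_mul_sq (Int.gcd_dvd_left x y) (Int.gcd_dvd_right x y) h)

theorem gcd_eq_gcd_of_sq_eq_add_mul_sq {x y z a b c d : ℤ} (hz : z ^ 2 = a * x ^ 2 + b * y ^ 2)
    (hy : y ^ 2 = c * x ^ 2 + d * z ^ 2) : Int.gcd x y = Int.gcd x z :=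
  Nat.dvd_antisymm (gcd_dvd_gcd_of_sq_eq_add_mul_sq hz) (gcd_dvd_gcd_of_sq_eq_add_mul_sq hy)

end Int

theorem stmt_5_general (b c r s t : ℤ)
    (hb : b = 1 + r ^ 2) (hc : c = 1 + s ^ 2) (hbct : b * c = 1 + t ^ 2) :
    Int.gcd t s = Int.gcd t r ∧ Int.gcd t r = Int.gcd r s := by
  subst hb hc
  refine ⟨Int.gcd_eq_gcd_of_sq_eq_add_mul_sq (a := 1) (b := -(1 + r ^ 2)) (c := 1)
      (d := -(1 + s ^ 2)) (by linear_combination hbct) (by linear_combination hbct), ?_⟩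
  rw [Int.gcd_comm t r]
  exact Int.gcd_eq_gcd_of_sq_eq_add_mul_sq (a := -(1 + s ^ 2)) (b := 1) (c := 1)
    (d := 1 + r ^ 2) (by linear_combination hbct) (by linear_combination -hbct)

theorem stmt_5 (b c r s t : ℤ) (hr : 0 < r) (hs : 0 < s) (ht : 0 < t)
    (hb1 : 1 < b) (hbc : b < c)
    (hb : b = 1 + r ^ 2) (hc : c = 1 + s ^ 2) (hbct : b * c = 1 + t ^ 2) :
    Int.gcd t s = Int.gcd t r ∧ Int.gcd t r = Int.gcd r s :=
  stmt_5_general b c r s t hb hc hbct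
end

section
/- Suppose {1, b, c, d} is a D(−1) quadruple with 1 < b < c < d and c = 1 + s². Then c is not an odd prime. -/
/-- Equivalence of solutions `(x, y)` and `(x', y')` of `X² - d Y² = n`. -/
def solEquiv (d n x y x' y' : ℤ) : Prop :=
  x * x' ≡ d * (y * y') [ZMOD n] ∧ x * y' ≡ y * x' [ZMOD n]

theorem stmt_9 (b c d r s t x y z : ℤ)
    (hr : 0 < r) (hs : 0 < s) (hx : 0 < x) (ht : 0 < t) (hy : 0 < y) (hz : 0 < z)
    (hb1 : 1 < b) (hbc : b < c) (hcd : c < d)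
    (hb : b = 1 + r ^ 2) (hc : c = 1 + s ^ 2) (hd : d = 1 + x ^ 2)
    (hbct : b * c = 1 + t ^ 2) (hbdy : b * d = 1 + y ^ 2) (hcdz : c * d = 1 + z ^ 2)
    (hFFM : ¬ solEquiv b (r ^ 2) t s (b - r) (r - 1) ∧
            ¬ solEquiv b (r ^ 2) t s (b - r) (-(r - 1)) ∧
            ¬ solEquiv b (r ^ 2) t s r 0 ∧
            ¬ solEquiv b (r ^ 2) t s (-r) 0) :
    ¬ ∃ p : ℕ, p.Prime ∧ Odd p ∧ c = (p : ℤ) := by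
  rintro ⟨p, hp, -, hpc⟩
  have hcprime : Prime c := by rw [hpc]; exact Nat.prime_iff_prime_int.mp hp
  have hc0 : 0 < c := lt_trans (lt_trans one_pos hb1) hbc
  -- key factorization
  have hkey : (t - s) * (t + s) = r ^ 2 * c := by
    linear_combination -hbct + hc + c * hb
  -- t > s
  have hts : s < t := by nlinarith
  -- t < c
  have htc : t < c := by nlinarith
  -- s < c
  have hsc : s < c := by nlinarith
  -- c ∣ t + s
  have hdd : c ∣ (t - s) * (t + s) := ⟨r ^ 2, by linarith [hkey]⟩
  have hdvd : c ∣ t + s := by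
    rcases hcprime.dvd_mul.mp hdd with h | h
    · exfalso
      have := Int.le_of_dvd (by linarith) h
      linarith
    · exact h
  -- t + s = c
  obtain ⟨k, hk⟩ := hdvd
  have h1 : 0 < k := by
    have h0 : c * 0 < c * k := by rw [mul_zero, ← hk]; linarith
    exact lt_of_mul_lt_mul_left h0 (le_of_lt hc0)
  have h2 : k < 2 := by
    have h0 : c * k < c * 2 := by rw [← hk]; linarith
    exact lt_of_mul_lt_mul_left h0 (le_of_lt hc0)
  have hk1 : k = 1 := by omega
  have htps : t + s = c := by rw [hk, hk1, mul_one]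
  -- t - s = r ^ 2
  have htms : t = s + r ^ 2 := by
    have hcne : c ≠ 0 := ne_of_gt hc0
    have heq : (t - s) * c = r ^ 2 * c := by rw [← htps] at hkey ⊢; linarith [hkey]
    have := mul_right_cancel₀ hcne heq
    linarith
  -- derive the forbidden equivalence
  apply hFFM.2.1
  constructor
  · show Int.ModEq (r ^ 2) _ _
    rw [Int.modEq_iff_dvd]
    exact ⟨-(s * r) - 1 - r ^ 2 + r, by rw [htms, hb]; ring⟩
  · show Int.ModEq (r ^ 2) _ _
    rw [Int.modEq_iff_dvd]
    exact ⟨s + r - 1, by rw [htms, hb]; ring⟩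
end

section
/- Suppose {1, b, c, d} is a D(−1) quadruple with 1 < b < c < d. Then d is not an odd prime. -/
theorem stmt_10 (b c d r s t x y z : ℤ)
    (hr : 0 < r) (hs : 0 < s) (hx : 0 < x) (ht : 0 < t) (hy : 0 < y) (hz : 0 < z)
    (hb1 : 1 < b) (hbc : b < c) (hcd : c < d)
    (hb : b = 1 + r ^ 2) (hc : c = 1 + s ^ 2) (hd : d = 1 + x ^ 2)
    (hbct : b * c = 1 + t ^ 2) (hbdy : b * d = 1 + y ^ 2) (hcdz : c * d = 1 + z ^ 2)
    (hFFM : ¬ solEquiv b (r ^ 2) y x (b - r) (r - 1) ∧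
            ¬ solEquiv b (r ^ 2) y x (b - r) (-(r - 1)) ∧
            ¬ solEquiv b (r ^ 2) y x r 0 ∧
            ¬ solEquiv b (r ^ 2) y x (-r) 0) :
    ¬ ∃ p : ℕ, p.Prime ∧ Odd p ∧ d = (p : ℤ) := by
  rintro ⟨p, hp, hodd, hdp⟩
  obtain ⟨h1, h2, h3, h4⟩ := hFFM
  have hPrime : Prime d := by rw [hdp]; exact Nat.prime_iff_prime_int.mp hp
  -- key identity : y² = x² + r² d
  have hy2 : y ^ 2 = x ^ 2 + r ^ 2 * d := by
    have h := hbdy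
    rw [hb, hd] at h
    nlinarith [h]
  have hbx : b ≤ x ^ 2 := by
    have h : b < x ^ 2 + 1 := by rw [hd] at hcd; linarith
    linarith [Int.lt_add_one_iff.mp h]
  have hrx : r ^ 2 ≤ x ^ 2 - 1 := by rw [hb] at hbx; linarith
  have hdpos : 0 < d := by rw [hd]; positivity
  have hr2pos : 0 < r ^ 2 := by positivity
  have hxy : x < y := by nlinarith
  have hdvd : d ∣ (y - x) * (y + x) := ⟨r ^ 2, by linear_combination hy2⟩
  have hyle : y ≤ x ^ 2 := by
    by_contra hcon
    push_neg at hcon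
    have : x ^ 2 + 1 ≤ y := by linarith
    nlinarith [hy2, hrx, hd]
  rcases hPrime.dvd_mul.mp hdvd with hcase | hcase
  · -- d ∣ y - x : impossible by size
    have hge : d ≤ y - x := Int.le_of_dvd (by linarith) hcase
    rw [hd] at hge
    nlinarith [hy2, hrx, hd]
  · -- d ∣ y + x, and y + x < 2 d, so y + x = d
    obtain ⟨v, hv⟩ := hcase
    have hv1 : 1 ≤ v := by
      have h : d * 0 < d * v := by rw [← hv]; linarith
      linarith [lt_of_mul_lt_mul_left h hdpos.le]
    have hlt : y + x < 2 * d := by rw [hd]; nlinarith [hyle, hx]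
    have hv2 : v < 2 := by
      have h := hlt
      rw [hv] at h
      exact lt_of_mul_lt_mul_left (by linarith) hdpos.le
    have hv1' : v = 1 := le_antisymm (by omega) hv1
    have hyd : y + x = d := by rw [hv, hv1', mul_one]
    -- hence y - x = r²
    have hkey : y - x = r ^ 2 := by
      have hprod : (y - x) * d = r ^ 2 * d := by
        linear_combination hy2 - (y - x) * hyd
      exact mul_right_cancel₀ (by linarith) hprod
    -- contradiction with the second FFM non-equivalence
    apply h2
    have hyeq : y = x + r ^ 2 := by linarith
    subst hb hyeq
    constructor
    · exact Int.ModEq.symm <| Int.modEq_iff_dvd.mpr ⟨x * r + r ^ 2 - r + 1, by ring⟩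
    · exact Int.ModEq.symm <| Int.modEq_iff_dvd.mpr ⟨-(x + r - 1), by ring⟩
end

section
/- Let k be an odd positive integer such that X² − (k²+1)Y² = k² has two primitive (coprime) solutions (a, b) and (a′, b′) with (a, b) not equivalent to (a′, b′) nor to (a′, −b′). Then there exist coprime integers p, q > 1 with k = pq such that both p⁴ and q⁴ are primitively represented by the form X² − (k²+1)Y², i.e., there are coprime integers u, v with u² − (k²+1)v² = p⁴ and coprime integers u′, v′ with u′² − (k²+1)v′² = q⁴. -/
theorem dvd_of_sq_dvd_sq_sub_mul_sq {c d x y : ℤ} (hcd : IsCoprime c d) (hcx : c ∣ x)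
    (h : c ^ 2 ∣ x ^ 2 - d * y ^ 2) : c ∣ y := by
  have hdy : c ^ 2 ∣ d * y ^ 2 := by
    rw [show d * y ^ 2 = x ^ 2 - (x ^ 2 - d * y ^ 2) by ring]
    exact dvd_sub (pow_dvd_pow_of_dvd hcx 2) h
  exact (Int.pow_dvd_pow_iff two_ne_zero).mp (hcd.pow_left.dvd_of_dvd_mul_left hdy)

theorem isCoprime_of_isCoprime_sq_sub_mul_sq {d x y : ℤ} (h : IsCoprime (x ^ 2 - d * y ^ 2) x) :
    IsCoprime x y := by
  obtain ⟨s, t, hst⟩ := h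
  exact ⟨s * x + t, -(s * d * y), by linear_combination hst⟩

theorem Int.eq_sq_of_isCoprime_of_mul_eq_sq {x y c : ℤ} (hx : 0 < x) (hxy : IsCoprime x y)
    (h : x * y = c ^ 2) : ∃ p, 0 < p ∧ x = p ^ 2 := by
  obtain ⟨p, hp | hp⟩ := Int.sq_of_isCoprime hxy h
  · refine ⟨|p|, abs_pos.mpr ?_, by rw [sq_abs, hp]⟩
    rintro rfl
    simp [hp] at hx
  · nlinarith [sq_nonneg p]

/-- Otherwise `r` would divide `2 a a'`, `2 a b'`, `2 b a'` and `2 d b b'`, hence `a` and `b`. -/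
theorem not_prime_dvd_compositions {d n a b a' b' r : ℤ} (hn : IsCoprime (2 * d) n)
    (hab : IsCoprime a b) (hab' : IsCoprime a' b')
    (hsol : a ^ 2 - d * b ^ 2 = n) (hsol' : a' ^ 2 - d * b' ^ 2 = n)
    (hr : Prime r) (hrn : r ∣ n) (hA : r ∣ a * a' + d * (b * b')) :
    ¬ r ∣ a * a' - d * (b * b') := by
  intro hA'
  have hr2d : IsCoprime r (2 * d) :=
    (hr.coprime_iff_not_dvd).mpr fun h => hr.not_isUnit (hn.isUnit_of_dvd' h hrn)
  have hrd : IsCoprime r d := hr2d.of_mul_right_right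
  have hrn2 : r ^ 2 ∣ n * n := by rw [sq]; exact mul_dvd_mul hrn hrn
  have hB : r ∣ a * b' + b * a' := dvd_of_sq_dvd_sq_sub_mul_sq hrd hA
    (by convert hrn2 using 1; linear_combination (a' ^ 2 - d * b' ^ 2) * hsol + n * hsol')
  have hB' : r ∣ a * b' - b * a' := dvd_of_sq_dvd_sq_sub_mul_sq hrd hA'
    (by convert hrn2 using 1; linear_combination (a' ^ 2 - d * b' ^ 2) * hsol + n * hsol')
  have cancel_two_d : ∀ z, r ∣ 2 * d * z → r ∣ z := fun z => hr2d.dvd_of_dvd_mul_left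
  have cancel_two : ∀ z, r ∣ 2 * z → r ∣ z := fun z h =>
    cancel_two_d z (by rw [mul_right_comm]; exact dvd_mul_of_dvd_left h d)
  have h_aa' : r ∣ a * a' := cancel_two (a * a') ((dvd_add hA hA').trans (dvd_of_eq (by ring)))
  have h_ab' : r ∣ a * b' := cancel_two (a * b') ((dvd_add hB hB').trans (dvd_of_eq (by ring)))
  have h_ba' : r ∣ b * a' := cancel_two (b * a') ((dvd_sub hB hB').trans (dvd_of_eq (by ring)))
  have h_bb' : r ∣ b * b' := cancel_two_d (b * b') ((dvd_sub hA hA').trans (dvd_of_eq (by ring)))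
  obtain ⟨s, t, hst⟩ := hab'
  have ha : r ∣ a := by
    rw [show a = s * (a * a') + t * (a * b') by linear_combination -a * hst]
    exact dvd_add (dvd_mul_of_dvd_right h_aa' s) (dvd_mul_of_dvd_right h_ab' t)
  have hb : r ∣ b := by
    rw [show b = s * (b * a') + t * (b * b') by linear_combination -b * hst]
    exact dvd_add (dvd_mul_of_dvd_right h_ba' s) (dvd_mul_of_dvd_right h_bb' t)
  exact hr.not_isUnit (hab.isUnit_of_dvd' ha hb)

theorem exists_sq_dvd_and_sq_dvd_of_sq_dvd_mul {k x y : ℤ} (hk : 0 < k) (hxy : k ^ 2 ∣ x * y)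
    (H : ∀ r, Prime r → r ∣ k → r ∣ x → ¬ r ∣ y) :
    ∃ p q, 0 < p ∧ 0 < q ∧ p * q = k ∧ p ^ 2 ∣ x ∧ q ^ 2 ∣ y ∧
      IsCoprime p y ∧ IsCoprime q x := by
  have H' : ∀ r, Prime r → r ∣ k ^ 2 → r ∣ x → ¬ r ∣ y := fun r hr hrk =>
    H r hr (hr.dvd_of_dvd_pow hrk)
  obtain ⟨e, f, he, hf, hef⟩ := exists_dvd_and_dvd_of_dvd_mul hxy
  have hk2 : |e| * |f| = k ^ 2 := by rw [← abs_mul, ← hef, abs_of_pos (by positivity)]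
  have he0 : 0 < |e| := abs_pos.mpr (by rintro rfl; simp at hef; omega)
  have hf0 : 0 < |f| := pos_of_mul_pos_right (hk2 ▸ by positivity) he0.le
  have hef' : IsCoprime |e| |f| := isCoprime_of_prime_dvd (fun h => he0.ne' h.1)
    fun r hr hre hrf => H' r hr (hk2 ▸ dvd_mul_of_dvd_left hre _)
      (hre.trans ((abs_dvd _ _).mpr he)) (hrf.trans ((abs_dvd _ _).mpr hf))
  obtain ⟨p, hp, hpe⟩ := Int.eq_sq_of_isCoprime_of_mul_eq_sq he0 hef' hk2
  obtain ⟨q, hq, hqf⟩ := Int.eq_sq_of_isCoprime_of_mul_eq_sq hf0 hef'.symm (by rw [mul_comm, hk2])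
  have hpq : p * q = k :=
    (pow_left_inj₀ (by positivity) hk.le two_ne_zero).mp (by rw [mul_pow, ← hpe, ← hqf, hk2])
  have hpx : p ^ 2 ∣ x := hpe ▸ (abs_dvd _ _).mpr he
  have hqy : q ^ 2 ∣ y := hqf ▸ (abs_dvd _ _).mpr hf
  refine ⟨p, q, hp, hq, hpq, hpx, hqy, ?_, ?_⟩
  · exact isCoprime_of_prime_dvd (fun h => hp.ne' h.1) fun r hr hrp hry =>
      H r hr (hrp.trans ⟨q, hpq.symm⟩) (hrp.trans ((dvd_pow_self p two_ne_zero).trans hpx)) hry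
  · exact isCoprime_of_prime_dvd (fun h => hq.ne' h.1) fun r hr hrq hrx =>
      H r hr (hrq.trans ⟨p, by rw [← hpq, mul_comm]⟩) hrx
        (hrq.trans ((dvd_pow_self q two_ne_zero).trans hqy))

theorem exists_isCoprime_sq_sub_mul_sq_eq_pow_four {d p q x y : ℤ} (hpd : IsCoprime p d)
    (hp : p ≠ 0) (hqx : IsCoprime q x) (hpx : p ^ 2 ∣ x) (h : x ^ 2 - d * y ^ 2 = (p * q) ^ 4) :
    ∃ u v, IsCoprime u v ∧ u ^ 2 - d * v ^ 2 = q ^ 4 := by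
  have hpy : p ^ 2 ∣ y := dvd_of_sq_dvd_sq_sub_mul_sq hpd.pow_left hpx
    (by rw [h, mul_pow, ← pow_mul]; exact dvd_mul_right _ _)
  obtain ⟨u, rfl⟩ := hpx
  obtain ⟨v, rfl⟩ := hpy
  have huv : u ^ 2 - d * v ^ 2 = q ^ 4 :=
    mul_left_cancel₀ (pow_ne_zero 4 hp) (by linear_combination h)
  refine ⟨u, v, isCoprime_of_isCoprime_sq_sub_mul_sq (d := d) ?_, huv⟩
  rw [huv]
  exact hqx.pow_left.of_isCoprime_of_dvd_right (dvd_mul_left u _)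

theorem solEquiv_of_dvd_composition {d n a b a' b' : ℤ} (hnd : IsCoprime n d)
    (hsol : a ^ 2 - d * b ^ 2 = n) (hsol' : a' ^ 2 - d * b' ^ 2 = n)
    (h : n ∣ a * a' - d * (b * b')) : solEquiv d n a b a' b' := by
  have hB : n ∣ a * b' - b * a' := dvd_of_sq_dvd_sq_sub_mul_sq hnd h
    (dvd_of_eq (by linear_combination (-(a' ^ 2 - d * b' ^ 2)) * hsol - n * hsol'))
  constructor
  · rw [Int.modEq_iff_dvd, ← neg_sub]
    exact dvd_neg.mpr h
  · rw [Int.modEq_iff_dvd, ← neg_sub]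
    exact dvd_neg.mpr hB

theorem stmt_14 (k a b a' b' : ℤ) (hk : 0 < k) (hodd : Odd k)
    (hab : IsCoprime a b) (hab' : IsCoprime a' b')
    (hsol : a ^ 2 - (k ^ 2 + 1) * b ^ 2 = k ^ 2)
    (hsol' : a' ^ 2 - (k ^ 2 + 1) * b' ^ 2 = k ^ 2)
    (hne : ¬ solEquiv (k ^ 2 + 1) (k ^ 2) a b a' b')
    (hne' : ¬ solEquiv (k ^ 2 + 1) (k ^ 2) a b a' (-b')) :
    ∃ p q u v u' v' : ℤ, 1 < p ∧ 1 < q ∧ IsCoprime p q ∧ k = p * q ∧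
      IsCoprime u v ∧ u ^ 2 - (k ^ 2 + 1) * v ^ 2 = p ^ 4 ∧
      IsCoprime u' v' ∧ u' ^ 2 - (k ^ 2 + 1) * v' ^ 2 = q ^ 4 := by
  set d := k ^ 2 + 1
  have hkd : IsCoprime k d := ⟨-k, 1, by ring⟩
  have hAA' : k ^ 2 ∣ (a * a' + d * (b * b')) * (a * a' - d * (b * b')) :=
    ⟨k ^ 2 + d * (b ^ 2 + b' ^ 2),
      by linear_combination a' ^ 2 * hsol + (d * b ^ 2 + k ^ 2) * hsol'⟩
  have h2dk : IsCoprime (2 * d) (k ^ 2) :=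
    (Int.isCoprime_two_left.mpr hodd.pow).mul_left ⟨1, -1, by ring⟩
  obtain ⟨p, q, hp, hq, hpq, hpA, hqA', hpA', hqA⟩ :=
    exists_sq_dvd_and_sq_dvd_of_sq_dvd_mul hk hAA' fun r hr hrk =>
      not_prime_dvd_compositions h2dk hab hab' hsol hsol' hr (dvd_pow hrk two_ne_zero)
  have hp1 : p ≠ 1 := by
    rintro rfl
    rw [one_mul] at hpq
    exact hne (solEquiv_of_dvd_composition hkd.pow_left hsol hsol' (hpq ▸ hqA'))
  have hq1 : q ≠ 1 := by
    rintro rfl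
    rw [mul_one] at hpq
    refine hne' (solEquiv_of_dvd_composition (b' := -b') hkd.pow_left hsol
      (by rwa [neg_sq]) ?_)
    rw [mul_neg, mul_neg, sub_neg_eq_add]
    exact hpq ▸ hpA
  obtain ⟨u, v, huv, hq4⟩ := exists_isCoprime_sq_sub_mul_sq_eq_pow_four (y := a * b' + b * a')
    (hkd.of_isCoprime_of_dvd_left ⟨q, hpq.symm⟩) hp.ne' hqA hpA
    (by rw [hpq]; linear_combination (a' ^ 2 - d * b' ^ 2) * hsol + k ^ 2 * hsol')
  obtain ⟨u', v', huv', hp4⟩ := exists_isCoprime_sq_sub_mul_sq_eq_pow_four (y := a * b' - b * a')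
    (hkd.of_isCoprime_of_dvd_left ⟨p, by rw [← hpq, mul_comm]⟩) hq.ne' hpA' hqA'
    (by rw [mul_comm q p, hpq]; linear_combination (a' ^ 2 - d * b' ^ 2) * hsol + k ^ 2 * hsol')
  exact ⟨p, q, u', v', u, v, by omega, by omega,
    (hqA.of_isCoprime_of_dvd_right ((dvd_pow_self p two_ne_zero).trans hpA)).symm, hpq.symm,
    huv', hp4, huv, hq4⟩
end

section
/- Let r = P·φ where P is prime and φ is a positive integer with φ⁴ < r. Then there is no D(−1) triple {1, 1+r², 1+s²} with gcd(r, s) = 1 extendable from the pair: more precisely, there are no positive integers s, t with gcd(r, s) = 1 and t² − (1+r²)s² = r² such that (t, s) is not equivalent to (1+r²−r, ±(r−1)) as solutions of X² − (1+r²)Y² = r². -/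
theorem exists_sq_dvd_sq_dvd_of_sq_dvd_mul {n X Y : ℤ} (hn : 0 ≤ n) (hXY : IsCoprime X Y)
    (h : n ^ 2 ∣ X * Y) :
    ∃ m q : ℤ, 0 ≤ m ∧ 0 ≤ q ∧ m * q = n ∧ m ^ 2 ∣ X ∧ q ^ 2 ∣ Y := by
  have hdvd : n.natAbs ∣ (X * Y).natAbs :=
    Int.natAbs_dvd_natAbs.mpr ((dvd_pow_self n two_ne_zero).trans h)
  refine ⟨n.gcd X, n.gcd Y, by positivity, by positivity, ?_, ?_, ?_⟩
  · rw [Int.gcd_eq_natAbs, Int.gcd_eq_natAbs, ← Nat.cast_mul,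
      ← Nat.Coprime.gcd_mul _ (Int.isCoprime_iff_nat_coprime.mp hXY), ← Int.natAbs_mul,
      Nat.gcd_eq_left hdvd, Int.natAbs_of_nonneg hn]
  · have hm : IsCoprime (n.gcd X : ℤ) Y := hXY.of_isCoprime_of_dvd_left (Int.gcd_dvd_right _ _)
    exact hm.pow_left.dvd_of_dvd_mul_right ((pow_dvd_pow_of_dvd (Int.gcd_dvd_left _ _) 2).trans h)
  · have hq : IsCoprime (n.gcd Y : ℤ) X :=
      hXY.symm.of_isCoprime_of_dvd_left (Int.gcd_dvd_right _ _)
    exact hq.pow_left.dvd_of_dvd_mul_left ((pow_dvd_pow_of_dvd (Int.gcd_dvd_left _ _) 2).trans h)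

section Pell

variable {r s t : ℤ}

theorem isCoprime_of_sq_sub_mul_sq_eq (hcop : IsCoprime r s)
    (heq : t ^ 2 - (1 + r ^ 2) * s ^ 2 = r ^ 2) : IsCoprime s t := by
  have h : IsCoprime s (r ^ 2 + s * ((1 + r ^ 2) * s)) := hcop.symm.pow_right.add_mul_left_right _
  rw [show r ^ 2 + s * ((1 + r ^ 2) * s) = t ^ 2 by linear_combination -heq] at h
  exact (IsCoprime.pow_right_iff two_pos).mp h

/-- `gcd (t - s) (t + s) ∣ 2`; when it is 2, halving the side whose half is odd keeps `r ^ 2`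
dividing the product, since then `s` is odd and `1 + s ^ 2` is even. -/
theorem exists_isCoprime_dvd_sub_dvd_add (hcop : IsCoprime r s)
    (heq : t ^ 2 - (1 + r ^ 2) * s ^ 2 = r ^ 2) :
    ∃ X Y : ℤ, X ∣ t - s ∧ Y ∣ t + s ∧ IsCoprime X Y ∧ r ^ 2 ∣ X * Y := by
  have hst := isCoprime_of_sq_sub_mul_sq_eq hcop heq
  rcases Int.even_or_odd (t - s) with ⟨a, ha⟩ | hodd
  · have hs : Odd s := by
      by_contra hs
      obtain ⟨k, hk⟩ := Int.not_odd_iff_even.mp hs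
      have h2 : IsUnit (2 : ℤ) := hst.isUnit_of_dvd' ⟨k, by omega⟩ ⟨a + k, by omega⟩
      norm_num [Int.isUnit_iff] at h2
    obtain ⟨k, hk⟩ := hs
    have has : IsCoprime a s := by
      have h : IsCoprime s (t + s * (-1)) := hst.add_mul_left_right _
      rw [show t + s * (-1) = 2 * a by omega] at h
      exact (h.of_isCoprime_of_dvd_right (dvd_mul_left a 2)).symm
    have hab : IsCoprime a (a + s) := by
      have h := has.add_mul_left_right 1
      rwa [mul_one, add_comm] at h
    have hprod : 2 * a * (a + s) = r ^ 2 * (2 * k ^ 2 + 2 * k + 1) := by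
      refine mul_left_cancel₀ two_ne_zero ?_
      rw [show t = a + a + s by omega] at heq
      subst hk; linear_combination heq
    rcases Int.even_or_odd a with ha2 | ha2
    · refine ⟨2 * a, a + s, ⟨1, by omega⟩, ⟨2, by omega⟩, ?_, ⟨_, hprod⟩⟩
      exact (Int.isCoprime_two_left.mpr (ha2.add_odd ⟨k, hk⟩)).mul_left hab
    · refine ⟨a, 2 * (a + s), ⟨2, by omega⟩, ⟨1, by omega⟩, ?_,
        ⟨_, by rw [← hprod]; ring⟩⟩
      exact (Int.isCoprime_two_right.mpr ha2).mul_right hab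
  · refine ⟨t - s, t + s, dvd_rfl, dvd_rfl, ?_, ⟨1 + s ^ 2, by linear_combination heq⟩⟩
    have hs : IsCoprime (t - s) s := by
      rw [sub_eq_add_neg, ← mul_neg_one, IsCoprime.add_mul_left_left_iff]; exact hst.symm
    rw [show t + s = 2 * s + (t - s) * 1 by ring, IsCoprime.add_mul_left_right_iff]
    exact (Int.isCoprime_two_right.mpr hodd).mul_right hs

theorem exists_sq_dvd_sub_sq_dvd_add (hr : 0 ≤ r) (hcop : IsCoprime r s)
    (heq : t ^ 2 - (1 + r ^ 2) * s ^ 2 = r ^ 2) :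
    ∃ m q : ℤ, 0 ≤ m ∧ 0 ≤ q ∧ m * q = r ∧ m ^ 2 ∣ t - s ∧ q ^ 2 ∣ t + s := by
  obtain ⟨X, Y, hX, hY, hXY, hdvd⟩ := exists_isCoprime_dvd_sub_dvd_add hcop heq
  obtain ⟨m, q, hm, hq, hmq, hmX, hqY⟩ := exists_sq_dvd_sq_dvd_of_sq_dvd_mul hr hXY hdvd
  exact ⟨m, q, hm, hq, hmq, hmX.trans hX, hqY.trans hY⟩

theorem mul_lt_of_sq_sub_mul_sq_eq_neg {x u N : ℤ} (hr : 0 < r) (hu : 0 < u) (hN : u ^ 2 < N)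
    (h : x ^ 2 - (1 + r ^ 2) * u ^ 2 = -N) : r * u < N := by
  have hx : |x| < r * u := abs_lt_of_sq_lt_sq (by nlinarith) (by positivity)
  have hfac : (r * u - |x|) * (r * u + |x|) = N - u ^ 2 := by
    linear_combination -h - sq_abs x
  nlinarith [abs_nonneg x]

theorem sq_le_sub_of_sq_dvd_sub {m q : ℤ} (hr : 0 < r)
    (heq : t ^ 2 - (1 + r ^ 2) * s ^ 2 = r ^ 2) (hmq : m * q = r) (hm : m ^ 2 ∣ t - s)
    (hst : s < t) (hq : q ^ 4 ≤ r) : r ^ 2 ≤ t - s := by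
  obtain ⟨u, hu⟩ := hm
  have hu0 : 0 < u := by
    rcases (mul_pos_iff.mp (hu ▸ sub_pos.mpr hst)) with ⟨-, h⟩ | ⟨h, -⟩
    · exact h
    · nlinarith
  have hqu : q ^ 2 * u * (t + s) = q ^ 4 * (1 + s ^ 2) := by
    refine mul_left_cancel₀ (pow_ne_zero 2 hr.ne') ?_
    subst hmq; linear_combination q ^ 4 * heq - q ^ 4 * (t + s) * hu
  have hpell : (q ^ 2 * s - u) ^ 2 - (1 + r ^ 2) * u ^ 2 = -q ^ 4 := by
    subst hmq; linear_combination -hqu + q ^ 2 * u * hu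
  by_contra hlt
  have huq : u < q ^ 2 := by nlinarith
  have := mul_lt_of_sq_sub_mul_sq_eq_neg hr hu0 (by nlinarith) hpell
  nlinarith

end Pell

section Descent

variable {r s t : ℤ}

/-- The step `(t, s) ↦ ((2 r ^ 2 + 1) t - 2 r (1 + r ^ 2) s, (2 r ^ 2 + 1) s - 2 r t)` is
multiplication by the norm-one unit `2 r ^ 2 + 1 - 2 r √(1 + r ^ 2)`. -/
theorem pell_step_bounds (hr : 0 < r) (ht : 0 < t) (hrs : r ≤ s)
    (heq : t ^ 2 - (1 + r ^ 2) * s ^ 2 = r ^ 2) :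
    0 < (2 * r ^ 2 + 1) * t - 2 * r * (1 + r ^ 2) * s ∧
      |(2 * r ^ 2 + 1) * s - 2 * r * t| < s := by
  have h₁ : r * s < t := lt_of_pow_lt_pow_left₀ 2 ht.le (by nlinarith)
  have h₂ : r * t < (1 + r ^ 2) * s := by
    have hsq : r ^ 2 ≤ s ^ 2 := pow_le_pow_left₀ hr.le hrs 2
    have h : ((1 + r ^ 2) * s) ^ 2 - (r * t) ^ 2 = (1 + r ^ 2) * s ^ 2 - r ^ 4 := by
      linear_combination (-r ^ 2) * heq
    exact lt_of_pow_lt_pow_left₀ 2 (by nlinarith) (by nlinarith)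
  have h₃ : 2 * r * (1 + r ^ 2) * s < (2 * r ^ 2 + 1) * t := by
    have h : ((2 * r ^ 2 + 1) * t) ^ 2 - (2 * r * (1 + r ^ 2) * s) ^ 2
        = (2 * r ^ 2 + 1) ^ 2 * r ^ 2 + (1 + r ^ 2) * s ^ 2 := by
      linear_combination (2 * r ^ 2 + 1) ^ 2 * heq
    exact lt_of_pow_lt_pow_left₀ 2 (by positivity) (by nlinarith [sq_nonneg s])
  exact ⟨by linarith, abs_lt.mpr ⟨by nlinarith, by nlinarith⟩⟩

theorem sq_dvd_sub_of_pell_step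
    (h : r ^ 2 ∣ ((2 * r ^ 2 + 1) * t - 2 * r * (1 + r ^ 2) * s) -
      ((2 * r ^ 2 + 1) * s - 2 * r * t)) :
    r ^ 2 ∣ t - s := by
  have hcop : IsCoprime (r ^ 2) (1 + 2 * r) := IsCoprime.pow_left ⟨-2, 1, by ring⟩
  rw [show ((2 * r ^ 2 + 1) * t - 2 * r * (1 + r ^ 2) * s) - ((2 * r ^ 2 + 1) * s - 2 * r * t)
    = r ^ 2 * (2 * t - 2 * r * s - 2 * s) + (1 + 2 * r) * (t - s) by ring] at h
  exact hcop.dvd_of_dvd_mul_left ((dvd_add_right (dvd_mul_right _ _)).mp h)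

theorem sq_dvd_add_of_pell_step
    (h : r ^ 2 ∣ ((2 * r ^ 2 + 1) * t - 2 * r * (1 + r ^ 2) * s) +
      ((2 * r ^ 2 + 1) * s - 2 * r * t)) :
    r ^ 2 ∣ t + s := by
  have hcop : IsCoprime (r ^ 2) (1 - 2 * r) := IsCoprime.pow_left ⟨2, 1, by ring⟩
  rw [show ((2 * r ^ 2 + 1) * t - 2 * r * (1 + r ^ 2) * s) + ((2 * r ^ 2 + 1) * s - 2 * r * t)
    = r ^ 2 * (2 * t - 2 * r * s + 2 * s) + (1 - 2 * r) * (t + s) by ring] at h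
  exact hcop.dvd_of_dvd_mul_left ((dvd_add_right (dvd_mul_right _ _)).mp h)

theorem sq_dvd_sub_or_sq_dvd_add_of_forall_lt (hr : 0 < r)
    (hbase : ∀ s t : ℤ, 0 < s → s < r → 0 < t → IsCoprime r s →
      t ^ 2 - (1 + r ^ 2) * s ^ 2 = r ^ 2 → r ^ 2 ∣ t - s ∨ r ^ 2 ∣ t + s)
    (hs : 0 < s) (ht : 0 < t) (hcop : IsCoprime r s)
    (heq : t ^ 2 - (1 + r ^ 2) * s ^ 2 = r ^ 2) : r ^ 2 ∣ t - s ∨ r ^ 2 ∣ t + s := by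
  induction hn : s.toNat using Nat.strong_induction_on generalizing s t with
  | _ n ih =>
  rcases lt_or_ge s r with hsr | hrs
  · exact hbase s t hs hsr ht hcop heq
  set t' := (2 * r ^ 2 + 1) * t - 2 * r * (1 + r ^ 2) * s
  set s' := (2 * r ^ 2 + 1) * s - 2 * r * t
  obtain ⟨ht', hs'⟩ := pell_step_bounds hr ht hrs heq
  obtain ⟨hs'lo, hs'hi⟩ := abs_lt.mp hs'
  have heq' : t' ^ 2 - (1 + r ^ 2) * s' ^ 2 = r ^ 2 := by linear_combination heq
  have hcop' : IsCoprime r s' := by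
    have h := hcop.add_mul_left_right (2 * r * s - 2 * t)
    rwa [show s + r * (2 * r * s - 2 * t) = s' by ring] at h
  suffices r ^ 2 ∣ t' - s' ∨ r ^ 2 ∣ t' + s' from
    this.imp sq_dvd_sub_of_pell_step sq_dvd_add_of_pell_step
  rcases lt_trichotomy s' 0 with hneg | hzero | hpos
  · have h := ih (-s').toNat (by omega) (neg_pos.mpr hneg) ht' hcop'.neg_right
      (by linear_combination heq') rfl
    rwa [sub_neg_eq_add, ← sub_eq_add_neg, or_comm] at h
  · rw [hzero, isCoprime_zero_right] at hcop'
    exact Or.inl (hcop'.pow 2).dvd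
  · exact ih s'.toNat (by omega) hpos ht' hcop' heq' rfl

end Descent

theorem sq_dvd_add_of_lt {r P φ s t : ℤ} (hP : Prime P) (hrPφ : r = P * φ) (hφ4 : φ ^ 4 < r)
    (hs : 0 < s) (hsr : s < r) (ht : 0 < t) (hcop : IsCoprime r s)
    (heq : t ^ 2 - (1 + r ^ 2) * s ^ 2 = r ^ 2) : r ^ 2 ∣ t + s := by
  have hr : 0 < r := (by positivity : (0 : ℤ) ≤ φ ^ 4).trans_lt hφ4
  have hφ : φ ≠ 0 := by rintro rfl; simp [hrPφ] at hr
  have hst : s < t := by nlinarith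
  have htr : t < r * (s + 1) := lt_of_pow_lt_pow_left₀ 2 (by positivity) (by nlinarith)
  have pow_four_lt : ∀ c : ℤ, 0 ≤ c → c ∣ φ → c ^ 4 < r := fun c hc hcφ => by
    have := Int.natAbs_le_of_dvd_ne_zero hcφ hφ
    calc c ^ 4 = (c.natAbs : ℤ) ^ 4 := by rw [Int.natAbs_of_nonneg hc]
      _ ≤ (φ.natAbs : ℤ) ^ 4 := by gcongr
      _ = φ ^ 4 := by rw [Int.natCast_natAbs, Even.pow_abs ⟨2, rfl⟩]
      _ < r := hφ4
  obtain ⟨m, q, hm, hq, hmq, hmA, hqB⟩ := exists_sq_dvd_sub_sq_dvd_add hr.le hcop heq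
  obtain ⟨m₀, hm₀⟩ | ⟨q₀, hq₀⟩ := hP.dvd_or_dvd (hmq ▸ hrPφ ▸ dvd_mul_right P φ)
  · have hqφ : q ∣ φ :=
      ⟨m₀, mul_left_cancel₀ hP.ne_zero (by linear_combination -hrPφ - hmq + q * hm₀)⟩
    have := sq_le_sub_of_sq_dvd_sub hr heq hmq hmA hst (pow_four_lt q hq hqφ).le
    nlinarith
  · have hmφ : m ∣ φ :=
      ⟨q₀, mul_left_cancel₀ hP.ne_zero (by linear_combination -hrPφ - hmq + m * hq₀)⟩
    have hm4 := pow_four_lt m hm hmφ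
    have hle : r ^ 2 ≤ t + s := by
      simpa using sq_le_sub_of_sq_dvd_sub (s := -s) hr (by linear_combination heq)
        ((mul_comm _ _).trans hmq) (by simpa using hqB) (by linarith) hm4.le
    have hm0 : 0 < m := pos_of_mul_pos_left (hmq ▸ hr) hq
    have hmltq : m < q := by
      have : m ^ 3 < q := lt_of_mul_lt_mul_left (by rw [← pow_succ', hmq]; exact hm4) hm
      exact (le_self_pow₀ hm0 (by norm_num)).trans_lt this
    have hzero : t + s - r ^ 2 = 0 := by
      refine Int.eq_zero_of_dvd_of_nonneg_of_lt (n := q ^ 2) (sub_nonneg.mpr hle) ?_ ?_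
      · nlinarith
      · exact dvd_sub hqB ⟨m ^ 2, by rw [← hmq]; ring⟩
    exact ⟨1, by linarith⟩

theorem solEquiv_of_dvd_sub {r s t : ℤ} (h : r ^ 2 ∣ t - s) :
    solEquiv (1 + r ^ 2) (r ^ 2) t s (1 + r ^ 2 - r) (-(r - 1)) := by
  have hts : t ≡ s [ZMOD r ^ 2] := (Int.modEq_iff_dvd.mpr h).symm
  exact ⟨(hts.mul_right _).trans (Int.modEq_iff_dvd.mpr ⟨-s * r, by ring⟩),
    (hts.mul_right _).trans (Int.modEq_iff_dvd.mpr ⟨s, by ring⟩)⟩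

theorem solEquiv_of_dvd_add {r s t : ℤ} (h : r ^ 2 ∣ t + s) :
    solEquiv (1 + r ^ 2) (r ^ 2) t s (1 + r ^ 2 - r) (r - 1) := by
  have hts : t ≡ -s [ZMOD r ^ 2] :=
    Int.modEq_iff_dvd.mpr (by rwa [show -s - t = -(t + s) by ring, dvd_neg])
  exact ⟨(hts.mul_right _).trans (Int.modEq_iff_dvd.mpr ⟨s * r, by ring⟩),
    (hts.mul_right _).trans (Int.modEq_iff_dvd.mpr ⟨s, by ring⟩)⟩

theorem stmt_16_general (r P φ : ℤ) (hP : Prime P) (hrPφ : r = P * φ)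
    (hφ4 : φ ^ 4 < r) :
    ¬ ∃ s t : ℤ, 0 < s ∧ 0 < t ∧ Int.gcd r s = 1 ∧
      t ^ 2 - (1 + r ^ 2) * s ^ 2 = r ^ 2 ∧
      ¬ solEquiv (1 + r ^ 2) (r ^ 2) t s (1 + r ^ 2 - r) (r - 1) ∧
      ¬ solEquiv (1 + r ^ 2) (r ^ 2) t s (1 + r ^ 2 - r) (-(r - 1)) := by
  rintro ⟨s, t, hs, ht, hgcd, heq, hne₁, hne₂⟩
  have hr : 0 < r := (by positivity : (0 : ℤ) ≤ φ ^ 4).trans_lt hφ4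
  rcases sq_dvd_sub_or_sq_dvd_add_of_forall_lt hr
      (fun s t hs hsr ht hcop heq => Or.inr (sq_dvd_add_of_lt hP hrPφ hφ4 hs hsr ht hcop heq))
      hs ht (Int.isCoprime_iff_gcd_eq_one.mpr hgcd) heq with h | h
  · exact hne₂ (solEquiv_of_dvd_sub h)
  · exact hne₁ (solEquiv_of_dvd_add h)

theorem stmt_16 (r P φ : ℤ) (hP : Prime P) (hφ : 0 < φ) (hrPφ : r = P * φ)
    (hφ4 : φ ^ 4 < r) :
    ¬ ∃ s t : ℤ, 0 < s ∧ 0 < t ∧ Int.gcd r s = 1 ∧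
      t ^ 2 - (1 + r ^ 2) * s ^ 2 = r ^ 2 ∧
      ¬ solEquiv (1 + r ^ 2) (r ^ 2) t s (1 + r ^ 2 - r) (r - 1) ∧
      ¬ solEquiv (1 + r ^ 2) (r ^ 2) t s (1 + r ^ 2 - r) (-(r - 1)) :=
  stmt_16_general r P φ hP hrPφ hφ4
end

section
/- Let r, s, t, c be positive integers with c = 1 + s² > 1 + r² and t² − (1+r²)s² = r². Then there is no factorization r = r₁r₂ with t − s = c·r₁² and t + s = r₂². -/
theorem stmt_17 (r s t c r₁ r₂ : ℤ)
    (hr : 0 < r) (hs : 0 < s) (ht : 0 < t) (hr₁ : 0 < r₁) (hr₂ : 0 < r₂)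
    (hc : c = 1 + s ^ 2) (hcb : 1 + r ^ 2 < c)
    (heq : t ^ 2 - (1 + r ^ 2) * s ^ 2 = r ^ 2)
    (hfac : r = r₁ * r₂) (h1 : t - s = c * r₁ ^ 2) (h2 : t + s = r₂ ^ 2) :
    False := by
  have h3 : r₂ ≤ r := by nlinarith
  have h4 : r₂ ^ 2 ≤ r ^ 2 := by nlinarith
  nlinarith [sq_nonneg r₁, sq_nonneg r₂]
end

section
/- Let r, s, t be positive integers with t² − (1+s²)r² = s², and suppose t − r = b₁ and t + r = b₂s² for a factorization 1 + r² = b₁b₂ with b₂ ≥ 2. Then a contradiction follows; hence any such factorization must have b₂ = 1, in which case s = r + 1 and t = r² + s. -/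
theorem stmt_19 (r s t b₁ b₂ : ℤ)
    (hr : 0 < r) (hs : 0 < s) (ht : 0 < t) (hb₁ : 0 < b₁)
    (hrs : r < s) (heq : t ^ 2 - (1 + s ^ 2) * r ^ 2 = s ^ 2)
    (hfac : 1 + r ^ 2 = b₁ * b₂) (hb₂ : 2 ≤ b₂)
    (h1 : t - r = b₁) (h2 : t + r = b₂ * s ^ 2) :
    False := by
  have hs' : r + 1 ≤ s := hrs
  nlinarith [sq_nonneg (s - r - 1), sq_nonneg r, mul_pos hr hs, sq_nonneg (b₂ - 2), mul_le_mul_of_nonneg_left hs' (le_of_lt hr)]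
end
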